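/- Let m > 0, N ≥ 2 an integer, and k ∈ ℝ with k ≠ 0. If l ≥ 1 is an odd integer then S_{l+2}(k) ≥ S_l(k); if l ≥ 0 is an even integer then S_{l+2}(k) ≤ S_l(k). -/

import Mathlib

/-- Legendre polynomial of degree `l` via Rodrigues' formula. -/
noncomputable def legendreP (l : ℕ) (y : ℝ) : ℝ :=
  (1 / (2 ^ l * (Nat.factorial l : ℝ))) * iteratedDeriv l (fun t : ℝ => (t ^ 2 - 1) ^ l) y

/-- The function `S_l(k)` for `k ≠ 0`. -/
noncomputable def Sl (m : ℝ) (N l : ℕ) (k : ℝ) : ℝ :=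
  2 * Real.pi ^ 2 * ((N : ℝ) - 1) *
    ∫ y in (-1 : ℝ)..(1 : ℝ),
      legendreP l y * Real.sinh (k * Real.arccos (y / (m + 1))) /
        (Real.sin (Real.arccos (y / (m + 1))) * Real.sinh (Real.pi * k))

/-!
Writing `arccos = π/2 - arcsin`, the integrand of `S_l(k)` is `P_l` times `a E - b O`, where
`E y = cosh (k arcsin (y/c)) / √(1 - (y/c)²)` is even, `O` (the same with `sinh`) is odd,
`c = m + 1`, and `a = sinh (kπ/2) / sinh (πk)`, `b = cosh (kπ/2) / sinh (πk)` are nonnegative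
for `k > 0` (`S_l` is even in `k`). Integrating Rodrigues' formula by parts `l` times turns
`S_l - S_{l+2}` into a nonnegative multiple of `∫ w_l (a E⁽ˡ⁾ - b O⁽ˡ⁾)` with the even weight
`w_l = (2l+3) / (2^(l+1) (l+1)!) · (1 - y²)^(l+1) ≥ 0`.
Both `E` and `O` solve `(c² - x²) F'' = 3x F' + (1 + k²) F`; differentiating this equation shows
inductively that all derivatives of `E` and `O` are nonnegative on `[0, c)`. By parity the term
of the wrong parity integrates to zero, while the other one has a sign: `a ∫ w_l E⁽ˡ⁾ ≥ 0` for
even `l` and `-b ∫ w_l O⁽ˡ⁾ ≤ 0` for odd `l`.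
-/

open Real Set
open scoped ContDiff Polynomial

section IteratedDeriv

section NormedField

variable {𝕜 E : Type*} [NontriviallyNormedField 𝕜] [NormedAddCommGroup E] [NormedSpace 𝕜 E]
  {s : Set 𝕜} {F : 𝕜 → E}

theorem ContDiffOn.iteratedDeriv_of_isOpen (hF : ContDiffOn 𝕜 ∞ F s) (hs : IsOpen s) (n : ℕ) :
    ContDiffOn 𝕜 ∞ (iteratedDeriv n F) s := by
  induction n with
  | zero => simpa using hF
  | succ n ih => simpa [iteratedDeriv_succ] using ih.deriv_of_isOpen hs (by simp)

theorem ContDiffOn.hasDerivAt_iteratedDeriv (hF : ContDiffOn 𝕜 ∞ F s) (hs : IsOpen s) (n : ℕ)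
    {x : 𝕜} (hx : x ∈ s) : HasDerivAt (iteratedDeriv n F) (iteratedDeriv (n + 1) F x) x := by
  rw [iteratedDeriv_succ]
  exact (((hF.iteratedDeriv_of_isOpen hs n).contDiffAt (hs.mem_nhds hx)).differentiableAt
    (by simp)).hasDerivAt

end NormedField

variable {F : ℝ → ℝ}

theorem iteratedDeriv_neg_of_parity {p : ℕ} (hF : ∀ x, F (-x) = (-1) ^ p * F x) (n : ℕ)
    (x : ℝ) : iteratedDeriv n F (-x) = (-1) ^ (n + p) * iteratedDeriv n F x := by
  have h := iteratedDeriv_comp_neg n F x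
  simp only [hF, iteratedDeriv_const_mul_field, smul_eq_mul] at h
  rw [pow_add, mul_assoc, h, ← mul_assoc, ← pow_add, Even.neg_one_pow ⟨n, rfl⟩, one_mul]

theorem iteratedDeriv_nonneg_of_parity {c : ℝ} {p n : ℕ} (hF : ∀ x, F (-x) = (-1) ^ p * F x)
    (hnp : Even (n + p)) (hnonneg : ∀ x ∈ Ico 0 c, 0 ≤ iteratedDeriv n F x) :
    ∀ x ∈ Ioo (-c) c, 0 ≤ iteratedDeriv n F x := by
  intro x ⟨hxl, hxr⟩
  rcases le_total 0 x with hx | hx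
  · exact hnonneg x ⟨hx, hxr⟩
  · have := hnonneg (-x) ⟨by linarith, by linarith⟩
    rwa [iteratedDeriv_neg_of_parity hF, hnp.neg_one_pow, one_mul] at this

end IteratedDeriv

section ODE

variable {c α β : ℝ} {F : ℝ → ℝ}

theorem iteratedDeriv_ode (hF : ContDiffOn ℝ ∞ F (Ioo (-c) c))
    (hode : ∀ x ∈ Ioo (-c) c,
      (c ^ 2 - x ^ 2) * deriv (deriv F) x = α * x * deriv F x + β * F x) (n : ℕ) :
    ∀ x ∈ Ioo (-c) c, (c ^ 2 - x ^ 2) * iteratedDeriv (n + 2) F x = (α + 2 * n) * x *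
      iteratedDeriv (n + 1) F x + (n * (n - 1 + α) + β) * iteratedDeriv n F x := by
  induction n with
  | zero => simpa [iteratedDeriv_succ] using hode
  | succ n ih =>
    intro x hx
    have hd := hF.hasDerivAt_iteratedDeriv isOpen_Ioo
    have hlhs : HasDerivAt (fun y => (c ^ 2 - y ^ 2) * iteratedDeriv (n + 2) F y)
        (-(2 * x) * iteratedDeriv (n + 2) F x + (c ^ 2 - x ^ 2) * iteratedDeriv (n + 3) F x) x := by
      simpa using ((hasDerivAt_pow 2 x).const_sub (c ^ 2)).fun_mul (hd (n + 2) hx)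
    have hrhs : HasDerivAt (fun y => (α + 2 * n) * y * iteratedDeriv (n + 1) F y +
          (n * (n - 1 + α) + β) * iteratedDeriv n F y)
        ((α + 2 * n) * iteratedDeriv (n + 1) F x + (α + 2 * n) * x * iteratedDeriv (n + 2) F x +
          (n * (n - 1 + α) + β) * iteratedDeriv (n + 1) F x) x := by
      simpa using (((hasDerivAt_id x).const_mul (α + 2 * n)).fun_mul (hd (n + 1) hx)).fun_add
        ((hd n hx).const_mul (n * (n - 1 + α) + β))
    have := Filter.EventuallyEq.deriv_eq
      (Filter.eventuallyEq_of_mem (isOpen_Ioo.mem_nhds hx) fun y hy => ih y hy)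
    rw [hlhs.deriv, hrhs.deriv] at this
    push_cast
    linear_combination this

theorem iteratedDeriv_nonneg_of_ode (hα : 0 ≤ α) (hβ : 0 ≤ β) (hF : ContDiffOn ℝ ∞ F (Ioo (-c) c))
    (hode : ∀ x ∈ Ioo (-c) c,
      (c ^ 2 - x ^ 2) * deriv (deriv F) x = α * x * deriv F x + β * F x)
    (hF₀ : ∀ x ∈ Ico 0 c, 0 ≤ F x) (hF₁ : ∀ x ∈ Ico 0 c, 0 ≤ deriv F x) (n : ℕ) :
    ∀ x ∈ Ico 0 c, 0 ≤ iteratedDeriv n F x := by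
  suffices ∀ n : ℕ, ∀ x ∈ Ico 0 c, 0 ≤ iteratedDeriv n F x ∧ 0 ≤ iteratedDeriv (n + 1) F x from
    fun x hx => (this n x hx).1
  intro n
  induction n with
  | zero => simpa using fun x hx => And.intro (hF₀ x hx) (hF₁ x hx)
  | succ n ih =>
    intro x hx
    refine ⟨(ih x hx).2, ?_⟩
    have hc : 0 < c ^ 2 - x ^ 2 := by nlinarith [hx.1, hx.2]
    have hrhs : 0 ≤ (α + 2 * n) * x * iteratedDeriv (n + 1) F x +
        (n * (n - 1 + α) + β) * iteratedDeriv n F x := by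
      have : (0 : ℝ) ≤ n * (n - 1 + α) + β := by
        rcases n with _ | n
        · simpa using hβ
        · push_cast; nlinarith
      exact add_nonneg (mul_nonneg (mul_nonneg (by positivity) hx.1) (ih x hx).2)
        (mul_nonneg this (ih x hx).1)
    have hode' := iteratedDeriv_ode hF hode n x ⟨by linarith [hx.1, hx.2], hx.2⟩
    exact nonneg_of_mul_nonneg_right (hode' ▸ hrhs) hc

noncomputable def rodriguesFun (n : ℕ) (t : ℝ) : ℝ := (t ^ 2 - 1) ^ n

theorem Polynomial.iteratedDeriv_eval {𝕜 : Type*} [NontriviallyNormedField 𝕜] (p : 𝕜[X]) (n : ℕ) :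
    iteratedDeriv n (fun x => p.eval x) = fun x => (derivative^[n] p).eval x := by
  induction n generalizing p with
  | zero => rfl
  | succ n ih =>
    rw [iteratedDeriv_succ', Function.iterate_succ_apply, ← ih]
    congr 1
    ext x
    exact p.deriv

theorem rodriguesFun_eq_eval (n : ℕ) :
    rodriguesFun n = fun t => ((Polynomial.X ^ 2 - 1) ^ n : ℝ[X]).eval t := by
  ext t
  simp [rodriguesFun]

theorem contDiff_rodriguesFun (n : ℕ) : ContDiff ℝ ∞ (rodriguesFun n) := by
  unfold rodriguesFun
  fun_prop

open Polynomial in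
theorem iteratedDeriv_rodriguesFun_eq_zero {n i : ℕ} (hi : i < n) {t : ℝ} (ht : t ^ 2 = 1) :
    iteratedDeriv i (rodriguesFun n) t = 0 := by
  have hdvd : (X - C t) ^ n ∣ (X ^ 2 - 1 : ℝ[X]) ^ n := by
    refine pow_dvd_pow_of_dvd (dvd_iff_isRoot.mpr ?_) n
    simp [ht]
  have := (dvd_pow_self _ (Nat.sub_ne_zero_of_lt hi)).trans
    (pow_sub_dvd_iterate_derivative_of_pow_dvd i hdvd)
  rw [rodriguesFun_eq_eval, Polynomial.iteratedDeriv_eval]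
  exact dvd_iff_isRoot.mp this

theorem iteratedDeriv_two_rodriguesFun (n : ℕ) (t : ℝ) :
    iteratedDeriv 2 (rodriguesFun (n + 2)) t =
      2 * (n + 2) * (t ^ 2 - 1) ^ (n + 1) + 4 * (n + 2) * (n + 1) * t ^ 2 * (t ^ 2 - 1) ^ n := by
  rw [rodriguesFun_eq_eval, Polynomial.iteratedDeriv_eval, Function.iterate_succ_apply,
    Function.iterate_one]
  simp only [Polynomial.derivative_pow, Nat.cast_add, Nat.cast_ofNat, map_add, map_natCast,
    Nat.add_one_sub_one, Polynomial.derivative_sub, pow_one, Polynomial.derivative_X, mul_one,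
    Polynomial.derivative_one, sub_zero, Polynomial.derivative_mul,
    Polynomial.derivative_natCast, Polynomial.derivative_C, add_zero, zero_mul, Nat.cast_one,
    map_one, add_tsub_cancel_right, zero_add, Polynomial.eval_add, Polynomial.eval_mul,
    Polynomial.eval_natCast, Polynomial.eval_C, Polynomial.eval_one, Polynomial.eval_pow,
    Polynomial.eval_sub, Polynomial.eval_X]
  ring

section IntegrationByParts

variable {s : Set ℝ} {F : ℝ → ℝ}

theorem integral_iteratedDeriv_rodriguesFun_mul (hF : ContDiffOn ℝ ∞ F s) (hs : IsOpen s)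
    (hsub : uIcc (-1) 1 ⊆ s) {n i j : ℕ} (hij : i + j ≤ n) :
    ∫ y in (-1)..1, iteratedDeriv (i + j) (rodriguesFun n) y * F y =
      (-1) ^ j * ∫ y in (-1)..1, iteratedDeriv i (rodriguesFun n) y * iteratedDeriv j F y := by
  induction j generalizing i with
  | zero => simp
  | succ j ih =>
    have hparts := intervalIntegral.integral_mul_deriv_eq_deriv_mul
      (fun y _ => (contDiff_rodriguesFun n).contDiffOn.hasDerivAt_iteratedDeriv isOpen_univ i
        (mem_univ y))
      (fun y hy => hF.hasDerivAt_iteratedDeriv hs j (hsub hy))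
      (((contDiff_rodriguesFun n).continuous_iteratedDeriv (i + 1)
        (mod_cast le_top)).intervalIntegrable _ _)
      ((hF.iteratedDeriv_of_isOpen hs (j + 1)).continuousOn.mono hsub).intervalIntegrable
    rw [iteratedDeriv_rodriguesFun_eq_zero (by omega) (by norm_num),
      iteratedDeriv_rodriguesFun_eq_zero (by omega) (by norm_num)] at hparts
    rw [show i + (j + 1) = i + 1 + j by omega, ih (by omega), hparts]
    ring

theorem integral_legendreP_mul (hF : ContDiffOn ℝ ∞ F s) (hs : IsOpen s) (hsub : uIcc (-1) 1 ⊆ s)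
    {n i l : ℕ} (h : i + l = n) :
    ∫ y in (-1)..1, legendreP n y * F y = (-1) ^ l / (2 ^ n * n.factorial) *
      ∫ y in (-1)..1, iteratedDeriv i (rodriguesFun n) y * iteratedDeriv l F y := by
  have hP : ∀ y, legendreP n y * F y =
      1 / (2 ^ n * n.factorial) * (iteratedDeriv (i + l) (rodriguesFun n) y * F y) := by
    intro y
    rw [h, legendreP, mul_assoc]
    rfl
  simp_rw [hP]
  rw [intervalIntegral.integral_const_mul, integral_iteratedDeriv_rodriguesFun_mul hF hs hsub h.le]
  ring

noncomputable def legendreDiffWeight (l : ℕ) (y : ℝ) : ℝ :=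
  (2 * l + 3) / (2 ^ (l + 1) * (l + 1).factorial) * (1 - y ^ 2) ^ (l + 1)

theorem legendreDiffWeight_eq (l : ℕ) (y : ℝ) :
    (-1) ^ l / (2 ^ l * l.factorial) * rodriguesFun l y -
      (-1) ^ l / (2 ^ (l + 2) * (l + 2).factorial) * iteratedDeriv 2 (rodriguesFun (l + 2)) y =
      legendreDiffWeight l y := by
  rw [iteratedDeriv_two_rodriguesFun, legendreDiffWeight, rodriguesFun, Nat.factorial_succ,
    Nat.factorial_succ]
  have h : (1 - y ^ 2) ^ (l + 1) = (-1) ^ (l + 1) * (y ^ 2 - 1) ^ (l + 1) := by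
    rw [← mul_pow]; ring
  rw [h]
  push_cast
  field_simp
  ring

theorem integral_legendreP_sub_legendreP_add_two (hF : ContDiffOn ℝ ∞ F s) (hs : IsOpen s)
    (hsub : uIcc (-1) 1 ⊆ s) (l : ℕ) :
    (∫ y in (-1)..1, legendreP l y * F y) - ∫ y in (-1)..1, legendreP (l + 2) y * F y =
      ∫ y in (-1)..1, legendreDiffWeight l y * iteratedDeriv l F y := by
  have hFl := (hF.iteratedDeriv_of_isOpen hs l).continuousOn.mono hsub
  have hq : ∀ n i, ContinuousOn (iteratedDeriv i (rodriguesFun n)) (uIcc (-1) 1) := fun n i =>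
    ((contDiff_rodriguesFun n).continuous_iteratedDeriv i (mod_cast le_top)).continuousOn
  rw [integral_legendreP_mul hF hs hsub (zero_add l),
    integral_legendreP_mul hF hs hsub (add_comm 2 l),
    ← intervalIntegral.integral_const_mul, ← intervalIntegral.integral_const_mul,
    ← intervalIntegral.integral_sub]
  · refine intervalIntegral.integral_congr fun y _ => ?_
    rw [← legendreDiffWeight_eq, iteratedDeriv_zero]
    ring
  all_goals exact ((hq _ _).mul hFl).intervalIntegrable.const_mul _

end IntegrationByParts

section WeightedIntegral

variable {F : ℝ → ℝ}

theorem intervalIntegral.integral_eq_zero_of_odd {f : ℝ → ℝ} (a : ℝ) (hf : ∀ x, f (-x) = -f x) :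
    ∫ x in -a..a, f x = 0 := by
  have h := intervalIntegral.integral_comp_neg (a := -a) (b := a) f
  simp only [neg_neg, hf, intervalIntegral.integral_neg] at h
  linarith

theorem legendreDiffWeight_neg (l : ℕ) (y : ℝ) :
    legendreDiffWeight l (-y) = legendreDiffWeight l y := by
  simp [legendreDiffWeight]

theorem legendreDiffWeight_nonneg (l : ℕ) {y : ℝ} (hy : y ∈ Icc (-1) 1) :
    0 ≤ legendreDiffWeight l y := by
  have : 0 ≤ 1 - y ^ 2 := by nlinarith [hy.1, hy.2]
  unfold legendreDiffWeight
  positivity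

theorem integral_legendreDiffWeight_mul_iteratedDeriv_eq_zero {p n : ℕ}
    (hF : ∀ x, F (-x) = (-1) ^ p * F x) (hnp : Odd (n + p)) (l : ℕ) :
    ∫ y in (-1)..1, legendreDiffWeight l y * iteratedDeriv n F y = 0 :=
  intervalIntegral.integral_eq_zero_of_odd 1 fun y => by
    rw [legendreDiffWeight_neg, iteratedDeriv_neg_of_parity hF, hnp.neg_one_pow]
    ring

theorem integral_legendreDiffWeight_mul_iteratedDeriv_nonneg {c : ℝ} (hc : 1 < c) {p n : ℕ}
    (hF : ∀ x, F (-x) = (-1) ^ p * F x) (hnp : Even (n + p))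
    (hnonneg : ∀ x ∈ Ico 0 c, 0 ≤ iteratedDeriv n F x) (l : ℕ) :
    0 ≤ ∫ y in (-1)..1, legendreDiffWeight l y * iteratedDeriv n F y :=
  intervalIntegral.integral_nonneg (by norm_num) fun y hy =>
    mul_nonneg (legendreDiffWeight_nonneg l hy)
      (iteratedDeriv_nonneg_of_parity hF hnp hnonneg y ⟨by linarith [hy.1], by linarith [hy.2]⟩)

end WeightedIntegral

noncomputable def secArcsin (c x : ℝ) : ℝ := (√(1 - (x / c) ^ 2))⁻¹

noncomputable def arcsinKernel (A : ℝ → ℝ) (k c x : ℝ) : ℝ :=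
  A (k * arcsin (x / c)) * secArcsin c x

section ArcsinKernel

variable {A B : ℝ → ℝ} {k c x : ℝ}

theorem div_mem_Ioo_of_mem_Ioo (hx : x ∈ Ioo (-c) c) : x / c ∈ Ioo (-1) 1 := by
  have hc : 0 < c := by linarith [hx.1, hx.2]
  constructor
  · rw [lt_div_iff₀ hc]; linarith [hx.1]
  · rw [div_lt_iff₀ hc]; linarith [hx.2]

theorem one_sub_div_sq_pos (hx : x ∈ Ioo (-c) c) : 0 < 1 - (x / c) ^ 2 := by
  obtain ⟨h₁, h₂⟩ := div_mem_Ioo_of_mem_Ioo hx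
  nlinarith

theorem sub_sq_mul_secArcsin_sq (hx : x ∈ Ioo (-c) c) :
    (c ^ 2 - x ^ 2) * secArcsin c x ^ 2 = c ^ 2 := by
  have hc : c ≠ 0 := by linarith [hx.1, hx.2]
  have hne : c ^ 2 - x ^ 2 ≠ 0 := by nlinarith [hx.1, hx.2]
  rw [secArcsin, inv_pow, sq_sqrt (one_sub_div_sq_pos hx).le]
  field_simp

theorem secArcsin_nonneg (c x : ℝ) : 0 ≤ secArcsin c x := inv_nonneg.mpr (sqrt_nonneg _)

theorem hasDerivAt_secArcsin (hx : x ∈ Ioo (-c) c) :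
    HasDerivAt (secArcsin c) (x / c ^ 2 * secArcsin c x ^ 3) x := by
  have hc : c ≠ 0 := by linarith [hx.1, hx.2]
  have hq := one_sub_div_sq_pos hx
  have hS := (sqrt_pos.mpr hq).ne'
  have hinner : HasDerivAt (fun y => 1 - (y / c) ^ 2) (-(2 * (x / c) * (1 / c))) x := by
    simpa using (((hasDerivAt_id' x).div_const c).pow 2).const_sub 1
  refine ((hinner.sqrt hq.ne').inv hS).congr_deriv ?_
  rw [secArcsin, inv_pow]
  field_simp

theorem hasDerivAt_arcsin_div (hx : x ∈ Ioo (-c) c) :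
    HasDerivAt (fun y => arcsin (y / c)) (secArcsin c x / c) x := by
  obtain ⟨h₁, h₂⟩ := div_mem_Ioo_of_mem_Ioo hx
  refine ((hasDerivAt_arcsin h₁.ne' h₂.ne).comp x ((hasDerivAt_id x).div_const c)).congr_deriv ?_
  simp [secArcsin, div_eq_mul_inv, mul_comm]

theorem hasDerivAt_arcsinKernel (hAB : ∀ t, HasDerivAt A (B t) t) (hx : x ∈ Ioo (-c) c) :
    HasDerivAt (arcsinKernel A k c) (secArcsin c x *
      (k / c * arcsinKernel B k c x + x / c ^ 2 * secArcsin c x * arcsinKernel A k c x)) x := by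
  have := ((hAB _).comp x ((hasDerivAt_arcsin_div hx).const_mul k)).mul (hasDerivAt_secArcsin hx)
  refine this.congr_deriv ?_
  simp only [arcsinKernel, Function.comp_apply]
  ring

theorem contDiffOn_arcsinKernel (hA : ContDiff ℝ ∞ A) :
    ContDiffOn ℝ ∞ (arcsinKernel A k c) (Ioo (-c) c) := by
  intro x hx
  obtain ⟨h₁, h₂⟩ := div_mem_Ioo_of_mem_Ioo hx
  have harcsin : ContDiffAt ℝ ∞ (fun y => arcsin (y / c)) x :=
    ContDiffAt.comp (g := arcsin) x (contDiffAt_arcsin h₁.ne' h₂.ne) (contDiffAt_id.div_const c)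
  have hsec : ContDiffAt ℝ ∞ (secArcsin c) x :=
    ((contDiffAt_sqrt (one_sub_div_sq_pos hx).ne').comp x
      (contDiffAt_const.sub ((contDiffAt_id.div_const c).pow 2))).inv
      (sqrt_pos.mpr (one_sub_div_sq_pos hx)).ne'
  exact ((hA.contDiffAt.comp x (contDiffAt_const.mul harcsin)).mul hsec).contDiffWithinAt

theorem arcsinKernel_ode (hAB : ∀ t, HasDerivAt A (B t) t) (hBA : ∀ t, HasDerivAt B (A t) t)
    (hx : x ∈ Ioo (-c) c) :
    (c ^ 2 - x ^ 2) * deriv (deriv (arcsinKernel A k c)) x =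
      3 * x * deriv (arcsinKernel A k c) x + (1 + k ^ 2) * arcsinKernel A k c x := by
  have hderiv : deriv (arcsinKernel A k c) =ᶠ[nhds x] fun y => secArcsin c y *
      (k / c * arcsinKernel B k c y + y / c ^ 2 * secArcsin c y * arcsinKernel A k c y) :=
    Filter.eventuallyEq_of_mem (isOpen_Ioo.mem_nhds hx) fun y hy =>
      (hasDerivAt_arcsinKernel hAB hy).deriv
  have hA := hasDerivAt_arcsinKernel (k := k) hAB hx
  have hB := hasDerivAt_arcsinKernel (k := k) hBA hx
  have hs := hasDerivAt_secArcsin hx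
  have h2 := hs.fun_mul ((hB.const_mul (k / c)).fun_add
    ((((hasDerivAt_id' x).div_const (c ^ 2)).fun_mul hs).fun_mul hA))
  rw [hderiv.deriv_eq, h2.deriv, hA.deriv]
  have hc : c ≠ 0 := by linarith [hx.1, hx.2]
  have key := sub_sq_mul_secArcsin_sq hx
  linear_combination (norm := skip) ((k ^ 2 + 1) / c ^ 2 * arcsinKernel A k c x +
    3 * k * x / c ^ 3 * secArcsin c x * arcsinKernel B k c x +
    3 * x ^ 2 / c ^ 4 * secArcsin c x ^ 2 * arcsinKernel A k c x) * key
  field_simp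
  ring

theorem arcsinKernel_neg {p : ℕ} (hA : ∀ t, A (-t) = (-1) ^ p * A t) (x : ℝ) :
    arcsinKernel A k c (-x) = (-1) ^ p * arcsinKernel A k c x := by
  simp only [arcsinKernel, secArcsin, neg_div, arcsin_neg, mul_neg, hA, neg_sq]
  ring

theorem iteratedDeriv_arcsinKernel_nonneg (hA : ContDiff ℝ ∞ A) (hAB : ∀ t, HasDerivAt A (B t) t)
    (hBA : ∀ t, HasDerivAt B (A t) t) (hA₀ : ∀ t, 0 ≤ t → 0 ≤ A t) (hB₀ : ∀ t, 0 ≤ t → 0 ≤ B t)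
    (hk : 0 ≤ k) (n : ℕ) : ∀ x ∈ Ico 0 c, 0 ≤ iteratedDeriv n (arcsinKernel A k c) x := by
  have hφ : ∀ x ∈ Ico 0 c, 0 ≤ k * arcsin (x / c) := fun x hx =>
    mul_nonneg hk (arcsin_nonneg.mpr (div_nonneg hx.1 (by linarith [hx.1, hx.2])))
  refine iteratedDeriv_nonneg_of_ode (α := 3) (β := 1 + k ^ 2) (by norm_num) (by positivity)
    (contDiffOn_arcsinKernel hA) (fun x hx => arcsinKernel_ode hAB hBA hx)
    (fun x hx => mul_nonneg (hA₀ _ (hφ x hx)) (secArcsin_nonneg c x)) (fun x hx => ?_) n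
  have hc : 0 < c := by linarith [hx.1, hx.2]
  have hsec := secArcsin_nonneg c x
  rw [(hasDerivAt_arcsinKernel hAB ⟨by linarith [hx.1], hx.2⟩).deriv]
  exact mul_nonneg hsec (add_nonneg
    (mul_nonneg (div_nonneg hk hc.le) (mul_nonneg (hB₀ _ (hφ x hx)) hsec))
    (mul_nonneg (mul_nonneg (div_nonneg hx.1 (sq_nonneg c)) hsec)
      (mul_nonneg (hA₀ _ (hφ x hx)) hsec)))

theorem arcsinKernel_cosh_neg (x : ℝ) :
    arcsinKernel cosh k c (-x) = (-1) ^ 0 * arcsinKernel cosh k c x :=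
  arcsinKernel_neg (by simp) x

theorem arcsinKernel_sinh_neg (x : ℝ) :
    arcsinKernel sinh k c (-x) = (-1) ^ 1 * arcsinKernel sinh k c x :=
  arcsinKernel_neg (by simp) x

theorem iteratedDeriv_arcsinKernel_cosh_nonneg (hk : 0 ≤ k) (n : ℕ) :
    ∀ x ∈ Ico 0 c, 0 ≤ iteratedDeriv n (arcsinKernel cosh k c) x :=
  iteratedDeriv_arcsinKernel_nonneg contDiff_cosh hasDerivAt_cosh hasDerivAt_sinh
    (fun t _ => (cosh_pos t).le) (fun _ => sinh_nonneg_iff.mpr) hk n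

theorem iteratedDeriv_arcsinKernel_sinh_nonneg (hk : 0 ≤ k) (n : ℕ) :
    ∀ x ∈ Ico 0 c, 0 ≤ iteratedDeriv n (arcsinKernel sinh k c) x :=
  iteratedDeriv_arcsinKernel_nonneg contDiff_sinh hasDerivAt_sinh hasDerivAt_cosh
    (fun _ => sinh_nonneg_iff.mpr) (fun t _ => (cosh_pos t).le) hk n

end ArcsinKernel

theorem sinh_mul_arccos_div_sin_arccos (k x : ℝ) :
    sinh (k * arccos x) / sin (arccos x) =
      (sinh (k * π / 2) * cosh (k * arcsin x) - cosh (k * π / 2) * sinh (k * arcsin x)) /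
        √(1 - x ^ 2) := by
  rw [sin_arccos, arccos_eq_pi_div_two_sub_arcsin, mul_sub, sinh_sub]
  ring_nf

noncomputable def slKernel (k c y : ℝ) : ℝ :=
  (sinh (π * k))⁻¹ * (sinh (k * π / 2) * arcsinKernel cosh k c y -
    cosh (k * π / 2) * arcsinKernel sinh k c y)

theorem Sl_eq_integral_slKernel (m : ℝ) (N l : ℕ) (k : ℝ) :
    Sl m N l k =
      2 * π ^ 2 * ((N : ℝ) - 1) * ∫ y in (-1)..1, legendreP l y * slKernel k (m + 1) y := by
  unfold Sl
  congr 1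
  refine intervalIntegral.integral_congr fun y _ => ?_
  simp only [mul_div_assoc, ← div_div, sinh_mul_arccos_div_sin_arccos, slKernel, arcsinKernel,
    secArcsin]
  ring

theorem Sl_neg (m : ℝ) (N l : ℕ) (k : ℝ) : Sl m N l (-k) = Sl m N l k := by
  simp only [Sl, neg_mul, mul_neg, sinh_neg, neg_div_neg_eq]

theorem contDiffOn_slKernel (k c : ℝ) : ContDiffOn ℝ ∞ (slKernel k c) (Ioo (-c) c) :=
  contDiffOn_const.mul ((contDiffOn_const.mul (contDiffOn_arcsinKernel contDiff_cosh)).sub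
    (contDiffOn_const.mul (contDiffOn_arcsinKernel contDiff_sinh)))

theorem iteratedDeriv_slKernel {k c y : ℝ} (n : ℕ) (hy : y ∈ Ioo (-c) c) :
    iteratedDeriv n (slKernel k c) y = (sinh (π * k))⁻¹ *
      (sinh (k * π / 2) * iteratedDeriv n (arcsinKernel cosh k c) y -
        cosh (k * π / 2) * iteratedDeriv n (arcsinKernel sinh k c) y) := by
  have hat : ∀ {A : ℝ → ℝ}, ContDiff ℝ ∞ A → ContDiffAt ℝ n (arcsinKernel A k c) y := fun hA =>
    ((contDiffOn_arcsinKernel hA).contDiffAt (isOpen_Ioo.mem_nhds hy)).of_le (mod_cast le_top)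
  unfold slKernel
  rw [iteratedDeriv_const_mul_field, iteratedDeriv_fun_sub
    (contDiffAt_const.mul (hat contDiff_cosh)) (contDiffAt_const.mul (hat contDiff_sinh)),
    iteratedDeriv_const_mul_field, iteratedDeriv_const_mul_field]

theorem Sl_sub_Sl_add_two {m : ℝ} (hm : 0 < m) (N l : ℕ) (k : ℝ) :
    Sl m N l k - Sl m N (l + 2) k = 2 * π ^ 2 * ((N : ℝ) - 1) / sinh (π * k) *
      (sinh (k * π / 2) * (∫ y in (-1)..1,
          legendreDiffWeight l y * iteratedDeriv l (arcsinKernel cosh k (m + 1)) y) -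
        cosh (k * π / 2) * ∫ y in (-1)..1,
          legendreDiffWeight l y * iteratedDeriv l (arcsinKernel sinh k (m + 1)) y) := by
  have hsub : uIcc (-1) 1 ⊆ Ioo (-(m + 1)) (m + 1) := fun y hy => by
    rw [uIcc_of_le (by norm_num)] at hy
    exact ⟨by linarith [hy.1], by linarith [hy.2]⟩
  have hw : Continuous (legendreDiffWeight l) := by unfold legendreDiffWeight; fun_prop
  have hint : ∀ {A : ℝ → ℝ}, ContDiff ℝ ∞ A → IntervalIntegrable
      (fun y => legendreDiffWeight l y * iteratedDeriv l (arcsinKernel A k (m + 1)) y)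
      MeasureTheory.volume (-1) 1 := fun hA => (hw.continuousOn.mul
    (((contDiffOn_arcsinKernel hA).iteratedDeriv_of_isOpen isOpen_Ioo l).continuousOn.mono
      hsub)).intervalIntegrable
  rw [Sl_eq_integral_slKernel, Sl_eq_integral_slKernel, ← mul_sub,
    integral_legendreP_sub_legendreP_add_two (contDiffOn_slKernel k (m + 1)) isOpen_Ioo hsub l,
    intervalIntegral.integral_congr (g := fun y => (sinh (π * k))⁻¹ *
      (sinh (k * π / 2) *
          (legendreDiffWeight l y * iteratedDeriv l (arcsinKernel cosh k (m + 1)) y) -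
        cosh (k * π / 2) *
          (legendreDiffWeight l y * iteratedDeriv l (arcsinKernel sinh k (m + 1)) y)))
      fun y hy => by rw [iteratedDeriv_slKernel l (hsub hy)]; ring,
    intervalIntegral.integral_const_mul, intervalIntegral.integral_sub
      ((hint contDiff_cosh).const_mul _) ((hint contDiff_sinh).const_mul _),
    intervalIntegral.integral_const_mul, intervalIntegral.integral_const_mul]
  ring

/-- For `k ≠ 0`: `S_{l+2}(k) ≥ S_l(k)` for odd `l`, and `S_{l+2}(k) ≤ S_l(k)` for even `l`. -/
theorem stmt13 (m : ℝ) (hm : 0 < m) (N : ℕ) (hN : 2 ≤ N) (k : ℝ) (hk : k ≠ 0) (l : ℕ) :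
    (Odd l → Sl m N l k ≤ Sl m N (l + 2) k) ∧
    (Even l → Sl m N (l + 2) k ≤ Sl m N l k) := by
  wlog hk₀ : 0 < k generalizing k
  · simpa only [Sl_neg] using
      this (-k) (neg_ne_zero.mpr hk) (neg_pos.mpr ((not_lt.mp hk₀).lt_of_ne hk))
  have hC : 0 ≤ 2 * π ^ 2 * ((N : ℝ) - 1) / sinh (π * k) := by
    have : (2 : ℝ) ≤ N := mod_cast hN
    exact div_nonneg (by nlinarith [sq_nonneg π]) (sinh_pos_iff.mpr (by positivity)).le
  have ha : 0 ≤ sinh (k * π / 2) := sinh_nonneg_iff.mpr (by positivity)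
  have hb : 0 ≤ cosh (k * π / 2) := (cosh_pos _).le
  have hc : 1 < m + 1 := by linarith
  constructor
  · intro hl
    rw [← sub_nonpos, Sl_sub_Sl_add_two hm, integral_legendreDiffWeight_mul_iteratedDeriv_eq_zero
      arcsinKernel_cosh_neg (by simpa using hl)]
    have := integral_legendreDiffWeight_mul_iteratedDeriv_nonneg hc arcsinKernel_sinh_neg
      (hl.add_odd odd_one) (iteratedDeriv_arcsinKernel_sinh_nonneg hk₀.le l) l
    exact mul_nonpos_of_nonneg_of_nonpos hC (by nlinarith)
  · intro hl
    rw [← sub_nonneg, Sl_sub_Sl_add_two hm, integral_legendreDiffWeight_mul_iteratedDeriv_eq_zero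
      arcsinKernel_sinh_neg (hl.add_odd odd_one)]
    have := integral_legendreDiffWeight_mul_iteratedDeriv_nonneg hc arcsinKernel_cosh_neg
      (by simpa using hl) (iteratedDeriv_arcsinKernel_cosh_nonneg hk₀.le l) l
    exact mul_nonneg hC (by nlinarith)
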